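/- Random reshuffling deviation bound under relaxed SGC: suppose each $f_i$ is $L_i$-smooth with $L_{\max} = \max_i L_i$, $f = \frac{1}{n}\sum_i f_i$, and $\frac{1}{n}\sum_{i=1}^n\|\nabla f_i(x)\|^2 \leq \rho\|\nabla f(x)\|^2 + \sigma^2$ for all $x$. Consider one epoch of random reshuffling: $\pi$ is a uniformly random permutation of $\{1,\ldots,n\}$ and $x_{j+1} = x_j - \eta \nabla f_{\pi(j+1)}(x_j)$ for $j = 0,\ldots,n-1$. If $\eta \leq \frac{1}{\sqrt{3} n L_{\max}}$, then $\mathbb{E}\left[\sum_{i=0}^{n-1}\|x_i - x_0\|^2\right] \leq 2\eta^2 n^2(\rho + n)\|\nabla f(x_0)\|^2 + 2\eta^2 n^2 \sigma^2$, where the expectation is over the random permutation (and $x_0$ is fixed). -/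

import Mathlib

/-!
Write `x_i - x_0 = -η ∑_{j<i} ∇f_{π j}(x_j)` and split every summand into the drift
`∇f_{π j}(x_j) - ∇f_{π j}(x_0)`, the fluctuation `w_{π j} := ∇f_{π j}(x_0) - ∇F(x_0)` and the
mean `∇F(x_0)`. Smoothness bounds the drift by the very sum `D = ∑_i ‖x_i - x_0‖²` being
estimated, and the step-size condition makes that contribution at most `D / 2`, so it can be
absorbed. The fluctuation `∑_{j<i} w_{π j}` is a sum of `i` draws without replacement from the
centred family `w`, whose second moment over a uniform `π` is `i(n-i)/(n(n-1)) ∑_k ‖w_k‖²`;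
summed over `i` this is `(n+1)/6 ∑_k ‖w_k‖²`, and the relaxed strong growth condition bounds
`∑_k ‖w_k‖² ≤ ∑_k ‖∇f_k(x_0)‖²` by `n (ρ ‖∇F(x_0)‖² + σ²)`.
-/

noncomputable section

/-- One epoch of (re)shuffled incremental updates: starting from `x0`, the
iterate after `j` steps using the sample order given by the permutation `π`,
gradient oracle `g` and step size `η`. -/
def epochIter {d n : ℕ}
    (g : Fin n → EuclideanSpace ℝ (Fin d) → EuclideanSpace ℝ (Fin d))
    (η : ℝ) (x0 : EuclideanSpace ℝ (Fin d)) (π : Equiv.Perm (Fin n)) :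
    ℕ → EuclideanSpace ℝ (Fin d)
  | 0 => x0
  | j + 1 =>
      if h : j < n then
        epochIter g η x0 π j - η • g (π ⟨j, h⟩) (epochIter g η x0 π j)
      else epochIter g η x0 π j

open Finset

theorem norm_sum_sq_le_card_mul {ι E : Type*} [SeminormedAddCommGroup E] (s : Finset ι)
    (v : ι → E) : ‖∑ j ∈ s, v j‖ ^ 2 ≤ #s * ∑ j ∈ s, ‖v j‖ ^ 2 :=
  (pow_le_pow_left₀ (norm_nonneg _) (norm_sum_le s v) 2).trans sq_sum_le_card_mul_sum_sq

theorem norm_add_add_sq_le {E : Type*} [SeminormedAddCommGroup E] (a b c : E) :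
    ‖a + b + c‖ ^ 2 ≤ 3 * (‖a‖ ^ 2 + ‖b‖ ^ 2 + ‖c‖ ^ 2) := by
  simpa [Fin.sum_univ_three, add_assoc] using norm_sum_sq_le_card_mul univ ![a, b, c]

theorem sum_range_natCast (n : ℕ) : ∑ i ∈ range n, (i : ℝ) = n * (n - 1) / 2 := by
  induction n with
  | zero => simp
  | succ m ih => rw [sum_range_succ, ih]; push_cast; ring

theorem sum_range_natCast_sq (n : ℕ) :
    ∑ i ∈ range n, (i : ℝ) ^ 2 = n * (n - 1) * (2 * n - 1) / 6 := by
  induction n with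
  | zero => simp
  | succ m ih => rw [sum_range_succ, ih]; push_cast; ring

theorem sum_range_natCast_mul_sub (n : ℕ) :
    ∑ i ∈ range n, (i : ℝ) * (n - i) = (n - 1) * n * (n + 1) / 6 := by
  simp only [mul_sub, ← sq, sum_sub_distrib, ← sum_mul, sum_range_natCast, sum_range_natCast_sq]
  ring

section Centred

variable {ι E : Type*} [Fintype ι] [NormedAddCommGroup E] [InnerProductSpace ℝ E]

theorem sum_sub_inv_card_smul_sum [Nonempty ι] (u : ι → E) :
    ∑ k, (u k - (Fintype.card ι : ℝ)⁻¹ • ∑ k', u k') = 0 := by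
  rw [sum_sub_distrib, sum_const, card_univ, ← Nat.cast_smul_eq_nsmul ℝ, smul_smul,
    mul_inv_cancel₀ (Nat.cast_ne_zero.mpr Fintype.card_ne_zero), one_smul, sub_self]

theorem sum_norm_sub_sq_le_of_sum_sub_eq_zero (u : ι → E) {v : E}
    (hv : ∑ k, (u k - v) = 0) : ∑ k, ‖u k - v‖ ^ 2 ≤ ∑ k, ‖u k‖ ^ 2 := by
  have hsplit : ∀ k, ‖u k‖ ^ 2 = ‖u k - v‖ ^ 2 + 2 * inner ℝ (u k - v) v + ‖v‖ ^ 2 := fun k => by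
    rw [← norm_add_sq_real, sub_add_cancel]
  simp only [hsplit, sum_add_distrib, ← mul_sum, ← sum_inner, hv, inner_zero_left, mul_zero,
    add_zero]
  exact le_add_of_nonneg_right (sum_nonneg fun _ _ => sq_nonneg _)

end Centred

theorem gradient_const_mul_sum {ι E : Type*} [Fintype ι] [NormedAddCommGroup E]
    [InnerProductSpace ℝ E] [CompleteSpace E] (c : ℝ) (f : ι → E → ℝ) {x : E}
    (hf : ∀ i, DifferentiableAt ℝ (f i) x) :
    gradient (fun x => c * ∑ i, f i x) x = c • ∑ i, gradient (f i) x := by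
  simp only [gradient]
  rw [fderiv_const_mul (DifferentiableAt.fun_sum fun i _ => hf i),
    fderiv_fun_sum fun i _ => hf i, map_smul, map_sum]

section PermutationAverages

variable {ι : Type*} [Fintype ι] [DecidableEq ι]

theorem sum_perm_apply_eq {M : Type*} [AddCommMonoid M] (g : ι → M) (j j' : ι) :
    ∑ π : Equiv.Perm ι, g (π j) = ∑ π : Equiv.Perm ι, g (π j') := by
  simpa using (Equiv.sum_comp (Equiv.mulRight (Equiv.swap j j')) fun π => g (π j)).symm

theorem card_nsmul_sum_perm_apply {M : Type*} [AddCommMonoid M] (g : ι → M) (j : ι) :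
    Fintype.card ι • ∑ π : Equiv.Perm ι, g (π j) = (Fintype.card ι).factorial • ∑ k, g k := by
  calc Fintype.card ι • ∑ π : Equiv.Perm ι, g (π j)
      = ∑ j' : ι, ∑ π : Equiv.Perm ι, g (π j') := by
        rw [← card_univ, ← sum_const]; exact sum_congr rfl fun j' _ => sum_perm_apply_eq g j j'
    _ = ∑ π : Equiv.Perm ι, ∑ k, g k :=
        sum_comm.trans (sum_congr rfl fun π _ => Equiv.sum_comp π g)
    _ = (Fintype.card ι).factorial • ∑ k, g k := by
        rw [sum_const, card_univ, Fintype.card_perm]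

theorem sum_perm_apply_apply_eq_of_ne {M : Type*} [AddCommMonoid M] (c : ι → ι → M)
    {j l j' l' : ι} (h : j ≠ l) (h' : j' ≠ l') :
    ∑ π : Equiv.Perm ι, c (π j) (π l) = ∑ π : Equiv.Perm ι, c (π j') (π l') := by
  obtain ⟨τ, hj, hl⟩ :=
    MulAction.is_two_pretransitive_iff.mp (Equiv.Perm.isMultiplyPretransitive ι 2) h' h
  rw [Equiv.Perm.smul_def] at hj hl
  rw [← hj, ← hl]
  exact Equiv.sum_comp (Equiv.mulRight τ) fun π => c (π j') (π l')

end PermutationAverages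

theorem sum_sum_eq_of_diag_offDiag {ι R : Type*} [DecidableEq ι] [CommRing R]
    (c : ι → ι → R) {a b : R} (hdiag : ∀ j, c j j = a) (hoff : ∀ j l, j ≠ l → c j l = b)
    (S : Finset ι) :
    ∑ j ∈ S, ∑ l ∈ S, c j l = #S * a + #S * (#S - 1) * b := by
  have hrow : ∀ j ∈ S, ∑ l ∈ S, c j l = a + (#S - 1) * b := by
    intro j hj
    rw [← add_sum_erase S _ hj, hdiag, sum_congr rfl fun l hl => hoff j l (ne_of_mem_erase hl).symm,
      sum_const, card_erase_of_mem hj, nsmul_eq_mul, Nat.cast_pred (card_pos.mpr ⟨j, hj⟩)]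
  rw [sum_congr rfl hrow, sum_const, nsmul_eq_mul]
  ring

theorem sum_perm_norm_sq_sum_apply {ι E : Type*} [Fintype ι] [DecidableEq ι] [Nontrivial ι]
    [NormedAddCommGroup E] [InnerProductSpace ℝ E] (w : ι → E) (hw : ∑ k, w k = 0)
    (S : Finset ι) :
    ∑ π : Equiv.Perm ι, ‖∑ j ∈ S, w (π j)‖ ^ 2 =
      (Fintype.card ι).factorial * (#S * (Fintype.card ι - #S) /
        (Fintype.card ι * (Fintype.card ι - 1))) * ∑ k, ‖w k‖ ^ 2 := by
  -- Permutations act 2-transitively, so the correlations `c j l` take one value on the diagonal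
  -- and one off it; `∑ w = 0` links the two.
  obtain ⟨j₀, l₀, hjl⟩ := exists_pair_ne ι
  set n : ℝ := (Fintype.card ι : ℝ)
  set c : ι → ι → ℝ := fun j l => ∑ π : Equiv.Perm ι, inner ℝ (w (π j)) (w (π l))
  have hexpand : ∀ s : Finset ι, ∑ π : Equiv.Perm ι, ‖∑ j ∈ s, w (π j)‖ ^ 2 =
      #s * c j₀ j₀ + #s * (#s - 1) * c j₀ l₀ := by
    intro s
    rw [← sum_sum_eq_of_diag_offDiag c
      (fun j => sum_perm_apply_eq (fun k => inner ℝ (w k) (w k)) j j₀)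
      (fun j l h => sum_perm_apply_apply_eq_of_ne (fun k k' => inner ℝ (w k) (w k')) h hjl)]
    simp only [c, ← real_inner_self_eq_norm_sq, sum_inner, inner_sum]
    rw [sum_comm]
    refine sum_congr rfl fun j _ => ?_
    rw [sum_comm]
    exact sum_congr rfl fun l _ => sum_congr rfl fun π _ => real_inner_comm _ _
  have hdiag : n * c j₀ j₀ = (Fintype.card ι).factorial * ∑ k, ‖w k‖ ^ 2 := by
    simpa only [c, nsmul_eq_mul, real_inner_self_eq_norm_sq] using
      card_nsmul_sum_perm_apply (fun k => inner ℝ (w k) (w k)) j₀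
  have htotal : n * c j₀ j₀ + n * (n - 1) * c j₀ l₀ = 0 := by
    simpa [Equiv.sum_comp _ w, hw, n] using (hexpand univ).symm
  have hn : (1 : ℝ) < n := by
    simpa only [n] using Nat.one_lt_cast.mpr (Fintype.one_lt_card (α := ι))
  have hn0 : n ≠ 0 := by linarith
  have hn1 : n - 1 ≠ 0 := by linarith
  rw [hexpand S]
  field_simp
  linear_combination (#S * (n - #S)) * hdiag + (#S * (#S - 1)) * htotal

theorem sum_perm_sum_range_norm_sq_sum_filter {E : Type*} [NormedAddCommGroup E]
    [InnerProductSpace ℝ E] {n : ℕ} (hn : 2 ≤ n) (w : Fin n → E) (hw : ∑ k, w k = 0) :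
    ∑ π : Equiv.Perm (Fin n), ∑ i ∈ range n,
        ‖∑ j ∈ univ.filter (fun j : Fin n => (j : ℕ) < i), w (π j)‖ ^ 2
      = n.factorial * ((n + 1) / 6) * ∑ k, ‖w k‖ ^ 2 := by
  have : Nontrivial (Fin n) := Fin.nontrivial_iff_two_le.mpr hn
  have hn0 : (n : ℝ) ≠ 0 := by positivity
  have hn1 : (n : ℝ) - 1 ≠ 0 := by
    have : (2 : ℝ) ≤ n := by exact_mod_cast hn
    linarith
  rw [sum_comm]
  calc _ = ∑ i ∈ range n, n.factorial * (i * (n - i) / (n * (n - 1))) * ∑ k, ‖w k‖ ^ 2 := by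
        refine sum_congr rfl fun i hi => ?_
        rw [sum_perm_norm_sq_sum_apply w hw, Fin.card_filter_val_lt,
          min_eq_right (mem_range.mp hi).le, Fintype.card_fin]
    _ = _ := by
        rw [← sum_mul, ← mul_sum, ← sum_div, sum_range_natCast_mul_sub]
        field_simp

section Epoch

variable {d n : ℕ} (g : Fin n → EuclideanSpace ℝ (Fin d) → EuclideanSpace ℝ (Fin d))
  (η : ℝ) (x0 : EuclideanSpace ℝ (Fin d)) (π : Equiv.Perm (Fin n))

theorem epochIter_eq_sub_smul_sum (i : ℕ) :
    epochIter g η x0 π i =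
      x0 - η • ∑ j ∈ univ.filter (fun j : Fin n => (j : ℕ) < i),
        g (π j) (epochIter g η x0 π j) := by
  induction i with
  | zero => simp [epochIter]
  | succ i ih =>
    by_cases h : i < n
    · have hset : univ.filter (fun j : Fin n => (j : ℕ) < i + 1) =
          insert ⟨i, h⟩ (univ.filter fun j : Fin n => (j : ℕ) < i) := by
        ext j
        simp only [Order.lt_add_one_iff, mem_filter, mem_univ, true_and, mem_insert, Fin.ext_iff]
        omega
      rw [epochIter, dif_pos h, hset, sum_insert (by simp), ih]
      simp only [smul_add]
      abel
    · have hset : univ.filter (fun j : Fin n => (j : ℕ) < i + 1) =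
          univ.filter (fun j : Fin n => (j : ℕ) < i) := by
        ext j
        simp only [Order.lt_add_one_iff, mem_filter, mem_univ, true_and]
        omega
      rw [epochIter, dif_neg h, hset, ih]

theorem norm_epochIter_sub_sq_le {L : ℝ} (hg : ∀ k x y, ‖g k x - g k y‖ ≤ L * ‖x - y‖)
    (v : EuclideanSpace ℝ (Fin d)) {i : ℕ} (hi : i ≤ n) :
    ‖epochIter g η x0 π i - x0‖ ^ 2 ≤ 3 * η ^ 2 *
      (i * L ^ 2 * ∑ j ∈ range n, ‖epochIter g η x0 π j - x0‖ ^ 2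
        + ‖∑ j ∈ univ.filter (fun j : Fin n => (j : ℕ) < i), (g (π j) x0 - v)‖ ^ 2
        + i ^ 2 * ‖v‖ ^ 2) := by
  set x := epochIter g η x0 π
  set P := univ.filter (fun j : Fin n => (j : ℕ) < i)
  have hP : #P = i := by simp [P, Fin.card_filter_val_lt, hi]
  set drift := ∑ j ∈ P, (g (π j) (x j) - g (π j) x0)
  have hdecomp : x0 - x i = η • (drift + ∑ j ∈ P, (g (π j) x0 - v) + #P • v) := by
    rw [show x i = _ from epochIter_eq_sub_smul_sum g η x0 π i, sub_sub_cancel, ← sum_const,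
      ← sum_add_distrib, ← sum_add_distrib]
    simp only [sub_add_sub_cancel, sub_add_cancel]
    rfl
  have hdrift : ‖drift‖ ^ 2 ≤ i * L ^ 2 * ∑ j ∈ range n, ‖x j - x0‖ ^ 2 := by
    calc ‖drift‖ ^ 2 ≤ i * ∑ j ∈ P, ‖g (π j) (x j) - g (π j) x0‖ ^ 2 :=
          hP ▸ norm_sum_sq_le_card_mul _ _
      _ ≤ i * ∑ j ∈ P, L ^ 2 * ‖x j - x0‖ ^ 2 := by
          gcongr with j
          rw [← mul_pow]
          exact pow_le_pow_left₀ (norm_nonneg _) (hg _ _ _) 2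
      _ ≤ i * ∑ j : Fin n, L ^ 2 * ‖x j - x0‖ ^ 2 := by
          gcongr
          exact subset_univ P
      _ = i * L ^ 2 * ∑ j ∈ range n, ‖x j - x0‖ ^ 2 := by
          rw [Fin.sum_univ_eq_sum_range (fun j => L ^ 2 * ‖x j - x0‖ ^ 2), ← mul_sum, mul_assoc]
  rw [← norm_neg, neg_sub, hdecomp, norm_smul, mul_pow, Real.norm_eq_abs, sq_abs,
    mul_comm 3 (η ^ 2), mul_assoc]
  gcongr
  refine (norm_add_add_sq_le _ _ _).trans ?_
  rw [RCLike.norm_nsmul ℝ, hP, nsmul_eq_mul, mul_pow]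
  gcongr

theorem sum_norm_epochIter_sub_sq_le {L : ℝ} (hg : ∀ k x y, ‖g k x - g k y‖ ≤ L * ‖x - y‖)
    (v : EuclideanSpace ℝ (Fin d)) (hstep : 3 * η ^ 2 * L ^ 2 * n ^ 2 ≤ 1) :
    ∑ i ∈ range n, ‖epochIter g η x0 π i - x0‖ ^ 2 ≤
      6 * η ^ 2 * ∑ i ∈ range n,
          ‖∑ j ∈ univ.filter (fun j : Fin n => (j : ℕ) < i), (g (π j) x0 - v)‖ ^ 2
        + 2 * η ^ 2 * n ^ 3 * ‖v‖ ^ 2 := by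
  set D := ∑ i ∈ range n, ‖epochIter g η x0 π i - x0‖ ^ 2
  set B := ∑ i ∈ range n,
    ‖∑ j ∈ univ.filter (fun j : Fin n => (j : ℕ) < i), (g (π j) x0 - v)‖ ^ 2
  have hD : 0 ≤ D := sum_nonneg fun _ _ => sq_nonneg _
  have hsum : D ≤ 3 * η ^ 2 * ((∑ i ∈ range n, (i : ℝ)) * L ^ 2 * D + B
      + (∑ i ∈ range n, (i : ℝ) ^ 2) * ‖v‖ ^ 2) := by
    refine (sum_le_sum fun i hi =>
      norm_epochIter_sub_sq_le g η x0 π hg v (mem_range.mp hi).le).trans_eq ?_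
    simp only [← mul_sum, sum_add_distrib, ← sum_mul, B, D]
  rw [sum_range_natCast, sum_range_natCast_sq] at hsum
  have hn : (0 : ℝ) ≤ n := n.cast_nonneg
  have hdrift : 3 * η ^ 2 * (n * (n - 1) / 2 * L ^ 2 * D) ≤ D / 2 := by
    calc 3 * η ^ 2 * (n * (n - 1) / 2 * L ^ 2 * D) ≤ 3 * η ^ 2 * (n ^ 2 / 2 * L ^ 2 * D) := by
          gcongr; nlinarith
      _ = (3 * η ^ 2 * L ^ 2 * n ^ 2) * D / 2 := by ring
      _ ≤ D / 2 := by gcongr; exact mul_le_of_le_one_left hD hstep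
  have hbias : 3 * η ^ 2 * (n * (n - 1) * (2 * n - 1) / 6 * ‖v‖ ^ 2)
      ≤ η ^ 2 * n ^ 3 * ‖v‖ ^ 2 := by
    have : (n : ℝ) * (n - 1) * (2 * n - 1) / 6 ≤ n ^ 3 / 3 := by
      rcases n.eq_zero_or_pos with rfl | hpos
      · simp
      · have : (1 : ℝ) ≤ n := by exact_mod_cast hpos
        nlinarith
    nlinarith [sq_nonneg η, sq_nonneg ‖v‖, mul_nonneg (sq_nonneg η) (sq_nonneg ‖v‖)]
  linarith

theorem sum_perm_sum_norm_epochIter_sub_sq_le (hn : 2 ≤ n) {L : ℝ}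
    (hg : ∀ k x y, ‖g k x - g k y‖ ≤ L * ‖x - y‖) (hstep : 3 * η ^ 2 * L ^ 2 * n ^ 2 ≤ 1)
    {v : EuclideanSpace ℝ (Fin d)} (hv : ∑ k, (g k x0 - v) = 0) :
    ∑ π : Equiv.Perm (Fin n), ∑ i ∈ range n, ‖epochIter g η x0 π i - x0‖ ^ 2 ≤
      n.factorial * (2 * η ^ 2 * n * ∑ k, ‖g k x0 - v‖ ^ 2 + 2 * η ^ 2 * n ^ 3 * ‖v‖ ^ 2) := by
  have hfluct := sum_perm_sum_range_norm_sq_sum_filter hn (fun k => g k x0 - v) hv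
  beta_reduce at hfluct
  have hn1 : (1 : ℝ) ≤ n := by exact_mod_cast (by omega : 1 ≤ n)
  calc _ ≤ ∑ π : Equiv.Perm (Fin n), (6 * η ^ 2 * ∑ i ∈ range n,
          ‖∑ j ∈ univ.filter (fun j : Fin n => (j : ℕ) < i), (g (π j) x0 - v)‖ ^ 2
        + 2 * η ^ 2 * n ^ 3 * ‖v‖ ^ 2) :=
        sum_le_sum fun π _ => sum_norm_epochIter_sub_sq_le g η x0 π hg v hstep
    _ = n.factorial * (η ^ 2 * (n + 1) * ∑ k, ‖g k x0 - v‖ ^ 2 + 2 * η ^ 2 * n ^ 3 * ‖v‖ ^ 2) := by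
        rw [sum_add_distrib, ← mul_sum, hfluct, sum_const, card_univ, Fintype.card_perm,
          Fintype.card_fin, nsmul_eq_mul]
        ring
    _ ≤ _ := by
        have hcoef : η ^ 2 * (n + 1) ≤ 2 * η ^ 2 * n := by nlinarith [sq_nonneg η]
        gcongr n.factorial * (?_ + _)
        exact mul_le_mul_of_nonneg_right hcoef (sum_nonneg fun _ _ => sq_nonneg _)

end Epoch

theorem rr_deviation_bound_relaxed_sgc_general
    (d n : ℕ) (hn : 2 ≤ n)
    (f : Fin n → EuclideanSpace ℝ (Fin d) → ℝ)
    (hdiff : ∀ i, Differentiable ℝ (f i))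
    (F : EuclideanSpace ℝ (Fin d) → ℝ)
    (hF : F = fun x => (n : ℝ)⁻¹ * ∑ i, f i x)
    (Lmax : ℝ)
    (hsmooth_i : ∀ i, ∀ x y : EuclideanSpace ℝ (Fin d),
      ‖gradient (f i) x - gradient (f i) y‖ ≤ Lmax * ‖x - y‖)
    (ρ σ : ℝ)
    (hSGC : ∀ x, (n : ℝ)⁻¹ * ∑ i, ‖gradient (f i) x‖ ^ 2
      ≤ ρ * ‖gradient F x‖ ^ 2 + σ ^ 2)
    (η : ℝ) (hη0 : 0 < η) (hη : η ≤ 1 / (Real.sqrt 3 * n * Lmax))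
    (x0 : EuclideanSpace ℝ (Fin d)) :
    ((Nat.factorial n : ℝ))⁻¹ *
        ∑ π : Equiv.Perm (Fin n), ∑ i ∈ Finset.range n,
          ‖epochIter (fun i => gradient (f i)) η x0 π i - x0‖ ^ 2
      ≤ 2 * η ^ 2 * n ^ 2 * (ρ + n) * ‖gradient F x0‖ ^ 2
        + 2 * η ^ 2 * n ^ 2 * σ ^ 2 := by
  have : NeZero n := ⟨by omega⟩
  have hn0 : (0 : ℝ) < n := by positivity
  have hmean : ∑ k, (gradient (f k) x0 - gradient F x0) = 0 := by
    have hgF : gradient F x0 = (n : ℝ)⁻¹ • ∑ i, gradient (f i) x0 := by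
      rw [hF]; exact gradient_const_mul_sum _ f fun i => (hdiff i).differentiableAt
    simpa only [Fintype.card_fin, ← hgF] using sum_sub_inv_card_smul_sum fun k => gradient (f k) x0
  have hstep : 3 * η ^ 2 * Lmax ^ 2 * n ^ 2 ≤ 1 := by
    have hc : 0 < Real.sqrt 3 * n * Lmax := one_div_pos.mp (hη0.trans_le hη)
    calc 3 * η ^ 2 * Lmax ^ 2 * n ^ 2 = (η * (Real.sqrt 3 * n * Lmax)) ^ 2 := by
          rw [mul_pow, mul_pow, mul_pow, Real.sq_sqrt (by norm_num)]; ring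
      _ ≤ 1 := pow_le_one₀ (by positivity) ((le_div_iff₀ hc).mp hη)
  have hvar : ∑ k, ‖gradient (f k) x0 - gradient F x0‖ ^ 2
      ≤ n * (ρ * ‖gradient F x0‖ ^ 2 + σ ^ 2) :=
    (sum_norm_sub_sq_le_of_sum_sub_eq_zero _ hmean).trans ((inv_mul_le_iff₀ hn0).mp (hSGC x0))
  rw [inv_mul_le_iff₀ (by positivity)]
  refine (sum_perm_sum_norm_epochIter_sub_sq_le _ η x0 hn hsmooth_i hstep hmean).trans ?_
  refine mul_le_mul_of_nonneg_left ?_ (by positivity)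
  nlinarith [mul_le_mul_of_nonneg_left hvar (by positivity : (0 : ℝ) ≤ 2 * η ^ 2 * n)]

/-- Random reshuffling within-epoch deviation bound under the relaxed strong
growth condition; the expectation is over the uniformly random permutation. -/
theorem rr_deviation_bound_relaxed_sgc
    (d n : ℕ) (hn : 2 ≤ n)
    (f : Fin n → EuclideanSpace ℝ (Fin d) → ℝ)
    (hdiff : ∀ i, Differentiable ℝ (f i))
    (F : EuclideanSpace ℝ (Fin d) → ℝ)
    (hF : F = fun x => (n : ℝ)⁻¹ * ∑ i, f i x)
    (Lmax : ℝ) (hLmax : 0 < Lmax)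
    (hsmooth_i : ∀ i, ∀ x y : EuclideanSpace ℝ (Fin d),
      ‖gradient (f i) x - gradient (f i) y‖ ≤ Lmax * ‖x - y‖)
    (ρ σ : ℝ) (hρ : 0 ≤ ρ) (hσ : 0 ≤ σ)
    (hSGC : ∀ x, (n : ℝ)⁻¹ * ∑ i, ‖gradient (f i) x‖ ^ 2
      ≤ ρ * ‖gradient F x‖ ^ 2 + σ ^ 2)
    (η : ℝ) (hη0 : 0 < η) (hη : η ≤ 1 / (Real.sqrt 3 * n * Lmax))
    (x0 : EuclideanSpace ℝ (Fin d)) :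
    ((Nat.factorial n : ℝ))⁻¹ *
        ∑ π : Equiv.Perm (Fin n), ∑ i ∈ Finset.range n,
          ‖epochIter (fun i => gradient (f i)) η x0 π i - x0‖ ^ 2
      ≤ 2 * η ^ 2 * n ^ 2 * (ρ + n) * ‖gradient F x0‖ ^ 2
        + 2 * η ^ 2 * n ^ 2 * σ ^ 2 :=
  rr_deviation_bound_relaxed_sgc_general d n hn f hdiff F hF Lmax hsmooth_i ρ σ hSGC η hη0 hη x0
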